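/- The limit as m → ∞ (with n = 4m+1) of 4·(∑_{k=1}^{(n-1)/4} (cos((k-1)π/(n-3)) − cos((2k-1)π/(2n-2))) + ∑_{k=(n+3)/4}^{(n-1)/2} (cos((2k-1)π/(2n-2)) − cos((k-1)π/(n-3)))) equals (8 − 8√2 + 2π)/π. -/

import Mathlib

/-!
With `n = 4m + 1`, set `δ = π / (8m - 4)` and `φ = π / (8m)`. Both cosine sums telescope after
multiplication by `2 sin δ`, resp. `2 sin φ`, and the partial sums up to `m` and `2m` end at the
angles `π/4` and `π/2`. This gives the exact value
`2 + 2 (√2 - cos δ) / sin δ - 2 (√2 - 1) / sin φ`.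
Since `1 / sin x - 1 / x` and `(1 - cos x) / sin x` are `O(x)` at `0` and `1/δ - 1/φ = -4/π`,
this tends to `2 - 8 (√2 - 1) / π`.
-/

open Real Filter Finset Topology Asymptotics

theorem two_mul_sin_mul_sum_Icc_cos_sub_one_mul (θ : ℝ) (N : ℕ) :
    2 * sin θ * ∑ k ∈ Icc 1 N, cos (((k : ℝ) - 1) * (2 * θ)) =
      sin ((2 * N - 1) * θ) + sin θ := by
  induction N with
  | zero => simp [neg_mul, sin_neg]
  | succ N ih =>
    rw [sum_Icc_succ_top (by omega), mul_add, ih, two_mul_sin_mul_cos]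
    push_cast
    rw [show θ - ((N + 1 : ℝ) - 1) * (2 * θ) = -((2 * N - 1) * θ) by ring, sin_neg,
      show θ + ((N + 1 : ℝ) - 1) * (2 * θ) = (2 * (N + 1) - 1) * θ by ring]
    ring

theorem two_mul_sin_mul_sum_Icc_cos_odd_mul (θ : ℝ) (N : ℕ) :
    2 * sin θ * ∑ k ∈ Icc 1 N, cos ((2 * (k : ℝ) - 1) * θ) = sin (2 * N * θ) := by
  induction N with
  | zero => simp
  | succ N ih =>
    rw [sum_Icc_succ_top (by omega), mul_add, ih, two_mul_sin_mul_cos]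
    push_cast
    rw [show θ - (2 * (N + 1 : ℝ) - 1) * θ = -(2 * N * θ) by ring, sin_neg,
      show θ + (2 * (N + 1 : ℝ) - 1) * θ = 2 * (N + 1) * θ by ring]
    ring

theorem sum_Icc_succ_eq_sub {M : Type*} [AddCommGroup M] (f : ℕ → M) {m n : ℕ} (hmn : m ≤ n) :
    ∑ k ∈ Icc (m + 1) n, f k = ∑ k ∈ Icc 1 n, f k - ∑ k ∈ Icc 1 m, f k := by
  rw [eq_sub_iff_add_eq', Icc_add_one_left_eq_Ioc, ← zero_add 1, Icc_add_one_left_eq_Ioc]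
  exact sum_Ioc_consecutive f (Nat.zero_le m) hmn

theorem abs_inv_sin_sub_inv_le {x : ℝ} (hx : |x| ≤ π / 2) :
    |(sin x)⁻¹ - x⁻¹| ≤ π / 12 * |x| := by
  rcases eq_or_ne x 0 with rfl | hx0
  · simp
  have hsin : 2 / π * |x| ≤ |sin x| := mul_abs_le_abs_sin hx
  have hsin0 : 0 < |sin x| := lt_of_lt_of_le (by positivity) hsin
  rw [inv_sub_inv (abs_pos.1 hsin0) hx0, abs_div, abs_mul, div_le_iff₀ (by positivity)]
  calc |x - sin x| ≤ |x| ^ 3 / 6 := abs_sub_sin_le x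
    _ = π / 12 * |x| * (|x| * (2 / π * |x|)) := by field_simp; ring
    _ ≤ π / 12 * |x| * (|sin x| * |x|) := by rw [mul_comm |sin x|]; gcongr

theorem abs_one_sub_cos_div_sin_le {x : ℝ} (hx : |x| ≤ π / 2) :
    |(1 - cos x) / sin x| ≤ π / 4 * |x| := by
  rcases eq_or_ne x 0 with rfl | hx0
  · simp
  have hsin : 2 / π * |x| ≤ |sin x| := mul_abs_le_abs_sin hx
  have hsin0 : 0 < |sin x| := lt_of_lt_of_le (by positivity) hsin
  rw [abs_div, div_le_iff₀ hsin0, abs_of_nonneg (sub_nonneg.2 (cos_le_one x))]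
  calc 1 - cos x ≤ x ^ 2 / 2 := by linarith [one_sub_sq_div_two_le_cos (x := x)]
    _ = π / 4 * |x| * (2 / π * |x|) := by rw [← sq_abs]; field_simp; ring
    _ ≤ π / 4 * |x| * |sin x| := by gcongr

theorem eventually_abs_le_pi_div_two : ∀ᶠ x in 𝓝 (0 : ℝ), |x| ≤ π / 2 :=
  (continuous_abs.tendsto' 0 0 abs_zero).eventually (ge_mem_nhds pi_div_two_pos)

-- Both functions take the junk value `0` at `x = 0`, so these are limits in `𝓝 0`, not `𝓝[≠] 0`.
theorem tendsto_inv_sin_sub_inv : Tendsto (fun x => (sin x)⁻¹ - x⁻¹) (𝓝 0) (𝓝 0) :=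
  (IsBigO.of_bound (π / 12) (eventually_abs_le_pi_div_two.mono fun _ ↦ abs_inv_sin_sub_inv_le)
    ).trans_tendsto tendsto_id

theorem tendsto_one_sub_cos_div_sin : Tendsto (fun x => (1 - cos x) / sin x) (𝓝 0) (𝓝 0) :=
  (IsBigO.of_bound (π / 4) (eventually_abs_le_pi_div_two.mono fun _ ↦ abs_one_sub_cos_div_sin_le)
    ).trans_tendsto tendsto_id

noncomputable def cosSumGap (m : ℕ) : ℝ :=
  (4 : ℝ) *
    ((∑ k ∈ Finset.Icc 1 ((4 * m + 1 - 1) / 4),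
        (Real.cos (((k : ℝ) - 1) * Real.pi / ((4 * (m : ℝ) + 1) - 3)) -
          Real.cos ((2 * (k : ℝ) - 1) * Real.pi / (2 * (4 * (m : ℝ) + 1) - 2)))) +
      ∑ k ∈ Finset.Icc ((4 * m + 1 + 3) / 4) ((4 * m + 1 - 1) / 2),
        (Real.cos ((2 * (k : ℝ) - 1) * Real.pi / (2 * (4 * (m : ℝ) + 1) - 2)) -
          Real.cos (((k : ℝ) - 1) * Real.pi / ((4 * (m : ℝ) + 1) - 3))))

theorem cosSumGap_eq_sums (m : ℕ) :
    cosSumGap m =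
      4 * (2 * ∑ k ∈ Icc 1 m, cos (((k : ℝ) - 1) * (2 * (π / (8 * m - 4))))
        - ∑ k ∈ Icc 1 (2 * m), cos (((k : ℝ) - 1) * (2 * (π / (8 * m - 4))))
        - 2 * ∑ k ∈ Icc 1 m, cos ((2 * (k : ℝ) - 1) * (π / (8 * m)))
        + ∑ k ∈ Icc 1 (2 * m), cos ((2 * (k : ℝ) - 1) * (π / (8 * m)))) := by
  have hθ : π / (4 * (m : ℝ) + 1 - 3) = 2 * (π / (8 * m - 4)) := by
    rw [show (8 * m - 4 : ℝ) = (4 * m + 1 - 3) * 2 by ring, ← div_div]; ring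
  have hφ : 2 * (4 * (m : ℝ) + 1) - 2 = 8 * m := by ring
  rw [cosSumGap, show (4 * m + 1 - 1) / 4 = m by omega, show (4 * m + 1 + 3) / 4 = m + 1 by omega,
    show (4 * m + 1 - 1) / 2 = 2 * m by omega, sum_Icc_succ_eq_sub (m := m) (n := 2 * m) _ (by omega)]
  simp only [mul_div_assoc, hθ, hφ, sum_sub_distrib]
  ring

theorem cosSumGap_eq {m : ℕ} (hm : 1 ≤ m) :
    cosSumGap m = 2 + 2 * (√2 - cos (π / (8 * m - 4))) / sin (π / (8 * m - 4))
      - 2 * (√2 - 1) / sin (π / (8 * m)) := by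
  have hm' : (1 : ℝ) ≤ m := by exact_mod_cast hm
  rw [cosSumGap_eq_sums]
  set δ := π / (8 * m - 4)
  set φ := π / (8 * m)
  have hδmul : δ * (8 * m - 4) = π := div_mul_cancel₀ _ (by linarith)
  have hφmul : φ * (8 * m) = π := div_mul_cancel₀ _ (by positivity)
  have hsinδ : 0 < sin δ :=
    sin_pos_of_pos_of_lt_pi (div_pos pi_pos (by linarith)) (div_lt_self pi_pos (by linarith))
  have hsinφ : 0 < sin φ :=
    sin_pos_of_pos_of_lt_pi (div_pos pi_pos (by linarith)) (div_lt_self pi_pos (by linarith))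
  have hA₁ := two_mul_sin_mul_sum_Icc_cos_sub_one_mul δ m
  have hA₂ := two_mul_sin_mul_sum_Icc_cos_sub_one_mul δ (2 * m)
  have hB₁ := two_mul_sin_mul_sum_Icc_cos_odd_mul φ m
  have hB₂ := two_mul_sin_mul_sum_Icc_cos_odd_mul φ (2 * m)
  push_cast at hA₂ hB₂
  rw [show (2 * m - 1) * δ = π / 4 by linear_combination hδmul / 4, sin_pi_div_four] at hA₁
  rw [show (2 * (2 * m) - 1) * δ = π / 2 + δ by linear_combination hδmul / 2, sin_add,
    sin_pi_div_two, cos_pi_div_two] at hA₂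
  rw [show 2 * m * φ = π / 4 by linear_combination hφmul / 4, sin_pi_div_four] at hB₁
  rw [show 2 * (2 * m) * φ = π / 2 by linear_combination hφmul / 2, sin_pi_div_two] at hB₂
  rw [mul_comm, ← eq_div_iff (by positivity)] at hA₁ hA₂ hB₁ hB₂
  rw [hA₁, hA₂, hB₁, hB₂]
  field_simp
  ring

theorem stmt9 :
    Tendsto (fun m : ℕ =>
      (4 : ℝ) *
        ((∑ k ∈ Finset.Icc 1 ((4 * m + 1 - 1) / 4),
            (Real.cos (((k : ℝ) - 1) * Real.pi / ((4 * (m : ℝ) + 1) - 3)) -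
              Real.cos ((2 * (k : ℝ) - 1) * Real.pi / (2 * (4 * (m : ℝ) + 1) - 2)))) +
          ∑ k ∈ Finset.Icc ((4 * m + 1 + 3) / 4) ((4 * m + 1 - 1) / 2),
            (Real.cos ((2 * (k : ℝ) - 1) * Real.pi / (2 * (4 * (m : ℝ) + 1) - 2)) -
              Real.cos (((k : ℝ) - 1) * Real.pi / ((4 * (m : ℝ) + 1) - 3)))))
      atTop (nhds ((8 - 8 * Real.sqrt 2 + 2 * Real.pi) / Real.pi)) := by
  have hm8 : Tendsto (fun m : ℕ => 8 * (m : ℝ)) atTop atTop :=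
    tendsto_natCast_atTop_atTop.const_mul_atTop (by norm_num)
  have hδ : Tendsto (fun m : ℕ => π / (8 * (m : ℝ) - 4)) atTop (𝓝 0) :=
    tendsto_const_nhds.div_atTop (tendsto_atTop_add_const_right _ (-4) hm8)
  have hφ : Tendsto (fun m : ℕ => π / (8 * (m : ℝ))) atTop (𝓝 0) :=
    tendsto_const_nhds.div_atTop hm8
  have hlim := (((tendsto_one_sub_cos_div_sin.comp hδ).const_mul 2).const_add 2).add
    ((((tendsto_inv_sin_sub_inv.comp hδ).sub (tendsto_inv_sin_sub_inv.comp hφ)).sub_const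
      (4 / π)).const_mul (2 * (√2 - 1)))
  rw [show (8 - 8 * √2 + 2 * π) / π = 2 + 2 * 0 + 2 * (√2 - 1) * (0 - 0 - 4 / π) by
    field_simp; ring]
  refine hlim.congr' ?_
  filter_upwards [eventually_ge_atTop 1] with m hm
  change _ = cosSumGap m
  rw [cosSumGap_eq hm]
  simp only [Function.comp_apply, inv_div]
  ring
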